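/- For every n ≥ 1, the characteristic polynomial of the graded poset (W(S_n), ≤) of Wachs permutations under Bruhat order equals (x−1)^{⌊n/2⌋} · x^{C(n,2) − C(⌊n/2⌋+1, 2)}. -/

import Mathlib

open Finset
open scoped Classical

namespace WachsPaper

/-! ### Type A (symmetric group) basics -/

/-- `w` is a permutation of `{1,…,n}` (it fixes everything outside `[1,n]`). -/
def PermOn (n : ℕ) (w : Equiv.Perm ℕ) : Prop :=
  ∀ i : ℕ, i ∉ Finset.Icc 1 n → w i = i

/-- the involution `i ↦ i*` on `[n]`. -/
def star (n i : ℕ) : ℕ :=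
  if i % 2 = 0 then i - 1 else if i + 1 ≤ n then i + 1 else n

/-- Wachs permutations of `S_n`. -/
def IsWachs (n : ℕ) (w : Equiv.Perm ℕ) : Prop :=
  PermOn n w ∧ ∀ i ∈ Finset.Icc 1 (n - 1),
    |(w⁻¹ i : ℤ) - (w⁻¹ (star n i) : ℤ)| ≤ 1

/-- the increasing rearrangement of `w(1),…,w(k)`. -/
def sortedPrefix (w : ℕ → ℕ) (k : ℕ) : List ℕ :=
  Finset.sort ((Finset.Icc 1 k).image w) (· ≤ ·)

/-- Bruhat order on `S_n` via the tableau criterion. -/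
def bruhatLE (n : ℕ) (u v : Equiv.Perm ℕ) : Prop :=
  ∀ k ∈ Finset.Icc 1 n, ∀ i : ℕ,
    (sortedPrefix (⇑u) k).getD i 0 ≤ (sortedPrefix (⇑v) k).getD i 0

def bruhatLT (n : ℕ) (u v : Equiv.Perm ℕ) : Prop :=
  bruhatLE n u v ∧ u ≠ v

/-- `v` covers `u` in the Bruhat order restricted to the set of permutations
satisfying `A`. -/
def covInduced (n : ℕ) (A : Equiv.Perm ℕ → Prop) (u v : Equiv.Perm ℕ) : Prop :=
  A u ∧ A v ∧ bruhatLT n u v ∧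
    ∀ z, A z → bruhatLT n u z → ¬ bruhatLT n z v

/-- number of inversions of `w` on `[1,n]` (Coxeter length on `S_n`). -/
def len (n : ℕ) (w : ℕ → ℕ) : ℕ :=
  (((Finset.Icc 1 n) ×ˢ (Finset.Icc 1 n)).filter
    (fun p => p.1 < p.2 ∧ w p.2 < w p.1)).card

/-- `v = φ_{2m}⁻¹(τ,T)`, i.e. `v` corresponds to the pair `(τ,T)` under `φ_{2m}`. -/
def phiRel (m : ℕ) (τ : Equiv.Perm ℕ) (T : Finset ℕ) (v : Equiv.Perm ℕ) : Prop :=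
  ∀ i ∈ Finset.Icc 1 m,
    if i ∈ T then v (2*i - 1) = 2 * τ i ∧ v (2*i) = 2 * τ i - 1
    else v (2*i - 1) = 2 * τ i - 1 ∧ v (2*i) = 2 * τ i

/-- position of the value `n` in `v`. -/
def pos (n : ℕ) (v : Equiv.Perm ℕ) : ℕ := v⁻¹ n

/-- `w = χ_n(v)`: `w` is obtained from `v` by deleting the value `n`. -/
def chiRel (n : ℕ) (v w : Equiv.Perm ℕ) : Prop :=
  PermOn (n - 1) w ∧ ∀ k ∈ Finset.Icc 1 (n - 1),
    w k = if k < pos n v then v k else v (k + 1)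

/-- `v = φ_{2m+1}⁻¹(i,τ,T)`. -/
def phiOddRel (m i : ℕ) (τ : Equiv.Perm ℕ) (T : Finset ℕ) (v : Equiv.Perm ℕ) : Prop :=
  pos (2*m+1) v = 2*i - 1 ∧ ∃ w : Equiv.Perm ℕ, chiRel (2*m+1) v w ∧ phiRel m τ T w

def chiVal (n : ℕ) (v : Equiv.Perm ℕ) (k : ℕ) : ℕ :=
  if k < pos n v then v k else v (k + 1)

/-- the underlying permutation `f_n(v) ∈ S_{⌊n/2⌋}` of a Wachs permutation `v`,
as a function. -/
def fMap (n : ℕ) (v : Equiv.Perm ℕ) : ℕ → ℕ :=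
  if n % 2 = 0 then fun i => (v (2*i - 1) + 1) / 2
  else fun i => (chiVal n v (2*i - 1) + 1) / 2

/-- `ℓ_W(v) = ℓ(v) - ℓ(f_n(v))`. -/
def lenW (n : ℕ) (v : Equiv.Perm ℕ) : ℕ := len n ⇑v - len (n / 2) (fMap n v)

def revFun (n i : ℕ) : ℕ := if 1 ≤ i ∧ i ≤ n then n + 1 - i else i

lemma revFun_invol (n : ℕ) : Function.Involutive (revFun n) := by
  intro i; unfold revFun; split_ifs <;> omega

/-- the maximal element `n … 3 2 1` of `S_n`. -/
def rev (n : ℕ) : Equiv.Perm ℕ := (revFun_invol n).toPerm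

/-- right weak order on `S_n`. -/
def weakLE (n : ℕ) (u v : Equiv.Perm ℕ) : Prop :=
  len n ⇑v = len n ⇑u + len n ⇑(u⁻¹ * v)

/-! ### Type B (hyperoctahedral group) basics -/

/-- membership in the window `[±n] = {-n,…,-1,1,…,n}`. -/
def inWindow (n : ℕ) (i : ℤ) : Prop :=
  (1 ≤ i ∧ i ≤ (n : ℤ)) ∨ (-(n : ℤ) ≤ i ∧ i ≤ -1)

instance (n : ℕ) (i : ℤ) : Decidable (inWindow n i) := by
  unfold inWindow; infer_instance

/-- `w` is an element of the hyperoctahedral group `B_n`, viewed as a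
permutation of `ℤ` with `w(-i) = -w(i)` fixing everything outside `[±n]`. -/
def PermOnB (n : ℕ) (w : Equiv.Perm ℤ) : Prop :=
  (∀ i : ℤ, w (-i) = - w i) ∧ ∀ i : ℤ, ¬ inWindow n i → w i = i

/-- signed Wachs permutations of `B_n`. -/
def IsSignedWachs (n : ℕ) (w : Equiv.Perm ℤ) : Prop :=
  PermOnB n w ∧ ∀ i ∈ Finset.Icc 1 (n - 1),
    |w⁻¹ (i : ℤ) - w⁻¹ ((star n i : ℕ) : ℤ)| ≤ 1

noncomputable def sortedPrefixB (n : ℕ) (w : ℤ → ℤ) (k : ℤ) : List ℤ :=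
  Finset.sort (((Finset.Icc (-(n : ℤ)) k).erase 0).image w) (· ≤ ·)

/-- Bruhat order on `B_n`, via the tableau criterion for the symmetric group
on `[±n]` under the natural embedding. -/
def bruhatLEB (n : ℕ) (u v : Equiv.Perm ℤ) : Prop :=
  ∀ k : ℤ, ∀ i : ℕ,
    (sortedPrefixB n (⇑u) k).getD i 0 ≤ (sortedPrefixB n (⇑v) k).getD i 0

def bruhatLTB (n : ℕ) (u v : Equiv.Perm ℤ) : Prop := bruhatLEB n u v ∧ u ≠ v

def covInducedB (n : ℕ) (A : Equiv.Perm ℤ → Prop) (u v : Equiv.Perm ℤ) : Prop :=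
  A u ∧ A v ∧ bruhatLTB n u v ∧ ∀ z, A z → bruhatLTB n u z → ¬ bruhatLTB n z v

noncomputable def invB (n : ℕ) (w : ℤ → ℤ) : ℕ :=
  (((Finset.Icc (1:ℤ) (n:ℤ)) ×ˢ (Finset.Icc (1:ℤ) (n:ℤ))).filter
    (fun p => p.1 < p.2 ∧ w p.2 < w p.1)).card

noncomputable def negB (n : ℕ) (w : ℤ → ℤ) : ℕ :=
  ((Finset.Icc (1:ℤ) (n:ℤ)).filter (fun i => w i < 0)).card

noncomputable def nspB (n : ℕ) (w : ℤ → ℤ) : ℕ :=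
  (((Finset.Icc (1:ℤ) (n:ℤ)) ×ˢ (Finset.Icc (1:ℤ) (n:ℤ))).filter
    (fun p => p.1 < p.2 ∧ w p.1 + w p.2 < 0)).card

/-- Coxeter length on `B_n`: `ℓ_B = inv + neg + nsp`. -/
noncomputable def lenB (n : ℕ) (w : ℤ → ℤ) : ℕ := invB n w + negB n w + nspB n w

/-- indicator `χ(P) ∈ {0,1}`. -/
def chiZ (P : Prop) [Decidable P] : ℤ := if P then 1 else 0

/-- `v = φ⁻¹(σ,T)` for `B_{2m}`. -/
def phiBRel (m : ℕ) (σ : Equiv.Perm ℤ) (T : Finset ℕ) (v : Equiv.Perm ℤ) : Prop :=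
  ∀ i ∈ Finset.Icc 1 m,
    if i ∈ T then
      v (2*(i:ℤ) - 1) = 2 * σ (i:ℤ) + chiZ (σ (i:ℤ) < 0) ∧
      v (2*(i:ℤ)) = 2 * σ (i:ℤ) - chiZ (0 < σ (i:ℤ))
    else
      v (2*(i:ℤ) - 1) = 2 * σ (i:ℤ) - chiZ (0 < σ (i:ℤ)) ∧
      v (2*(i:ℤ)) = 2 * σ (i:ℤ) + chiZ (σ (i:ℤ) < 0)

/-- the signed reflection `(a,b)_B`. -/
def sgnRefl (a b : ℤ) : Equiv.Perm ℤ :=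
  if a = -b then Equiv.swap a (-a) else Equiv.swap a b * Equiv.swap (-a) (-b)

/-- the coatom `c(v)` of Theorem 4.9. -/
def cB (m : ℕ) (v : Equiv.Perm ℤ) : Equiv.Perm ℤ :=
  if v⁻¹ (2*(m:ℤ)+1) = -1 then v * Equiv.swap (-1) 1
  else if v (v⁻¹ (2*(m:ℤ)+1) + 2) < v (v⁻¹ (2*(m:ℤ)+1) + 1) then
    v * sgnRefl (v⁻¹ (2*(m:ℤ)+1) + 1) (v⁻¹ (2*(m:ℤ)+1) + 2)
  else v * sgnRefl (v⁻¹ (2*(m:ℤ)+1)) (v⁻¹ (2*(m:ℤ)+1) + 2)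

/-- value of `v̄` (the element of `W(B_{2m})` obtained from `v ∈ W(B_{2m+1})` by
deleting the entries `±(2m+1)`) at a positive position `k`. -/
def barVal (m : ℕ) (v : Equiv.Perm ℤ) (k : ℤ) : ℤ :=
  if k < |v⁻¹ (2*(m:ℤ)+1)| then v k else v (k + 1)

def toHalf (x : ℤ) : ℤ := if 0 < x then (x + 1) / 2 else -((-x + 1) / 2)

/-- the underlying signed permutation `σ ∈ B_{⌊n/2⌋}` of `v ∈ W(B_n)`, as a function. -/
def fMapB (n : ℕ) (v : Equiv.Perm ℤ) : ℤ → ℤ :=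
  if n % 2 = 0 then fun i => toHalf (v (2*i - 1))
  else fun i => toHalf (barVal (n / 2) v (2*i - 1))

/-- `ℓ_W(v) = ℓ_B(v) - ℓ_B(σ)` for a signed Wachs permutation `v`. -/
noncomputable def lenWB (n : ℕ) (v : Equiv.Perm ℤ) : ℕ := lenB n ⇑v - lenB (n / 2) (fMapB n v)

/-- `v = (j,σ,S)` for `v ∈ W(B_{2m+1})`. -/
def phiBOddRel (m : ℕ) (j : ℤ) (σ : Equiv.Perm ℤ) (S : Finset ℕ) (v : Equiv.Perm ℤ) : Prop :=
  (v⁻¹ (2*(m:ℤ)+1) = if 0 < j then 2*j - 1 else 2*j + 1) ∧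
  ∃ w : Equiv.Perm ℤ, PermOnB (2*m) w ∧
    (∀ k ∈ Finset.Icc (1:ℤ) (2*(m:ℤ)), w k = barVal m v k) ∧ phiBRel m σ S w

def w0BFun (n : ℕ) (i : ℤ) : ℤ := if inWindow n i then -i else i

lemma w0BFun_invol (n : ℕ) : Function.Involutive (w0BFun n) := by
  intro i; unfold w0BFun inWindow; split_ifs <;> omega

/-- the maximal element `[-1,-2,…,-n]` of `B_n`. -/
def w0B (n : ℕ) : Equiv.Perm ℤ := (w0BFun_invol n).toPerm

/-- right weak order on `B_n`. -/
def weakLEB (n : ℕ) (u v : Equiv.Perm ℤ) : Prop :=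
  lenB n ⇑v = lenB n ⇑u + lenB n ⇑(u⁻¹ * v)


lemma list_sorted_ge (c : ℕ) : ∀ (l : List ℕ), l.Pairwise (· < ·) →
    (∀ x ∈ l, c ≤ x) → ∀ i < l.length, c + i ≤ l.getD i 0 := by
  intro l
  induction l generalizing c with
  | nil => intro _ _ i hi; simp at hi
  | cons a l ih =>
    intro hs hc i hi
    rcases List.pairwise_cons.1 hs with ⟨ha, hl⟩
    cases i with
    | zero => simpa using hc a (by simp)
    | succ i =>
      have h2 := ih (c+1) hl (fun x hx => by
        have := ha x hx
        have := hc a (by simp)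
        omega) i (by simpa using hi)
      rw [List.getD_cons_succ]
      omega

lemma list_sorted_le (N : ℕ) : ∀ (l : List ℕ), l.Pairwise (· < ·) →
    (∀ x ∈ l, x ≤ N) → ∀ i < l.length, l.getD i 0 + (l.length - 1 - i) ≤ N := by
  intro l
  induction l with
  | nil => intro _ _ i hi; simp at hi
  | cons a l ih =>
    intro hs hc i hi
    rcases List.pairwise_cons.1 hs with ⟨ha, hl⟩
    cases i with
    | zero =>
      simp only [List.getD_cons_zero, List.length_cons]
      rcases Nat.eq_zero_or_pos l.length with h0 | h0
      · have := hc a (by simp); omega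
      · have hg := list_sorted_ge (a+1) l hl (fun x hx => ha x hx) (l.length - 1) (by omega)
        have he : l.getD (l.length - 1) 0 = l[l.length - 1] := List.getD_eq_getElem l 0 (by omega)
        have hm : l.getD (l.length - 1) 0 ∈ l := by rw [he]; exact List.getElem_mem _
        have := hc _ (List.mem_cons_of_mem a hm)
        omega
    | succ i =>
      have := ih hl (fun x hx => hc x (by simp [hx])) i (by simpa using hi)
      simp only [List.getD_cons_succ, List.length_cons]
      omega

lemma getD_sort_ge (A : Finset ℕ) (hA : ∀ x ∈ A, 1 ≤ x) {i : ℕ} (hi : i < A.card) :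
    i + 1 ≤ (A.sort (· ≤ ·)).getD i 0 := by
  have := list_sorted_ge 1 (A.sort (· ≤ ·)) (A.sortedLT_sort.pairwise)
    (fun x hx => hA x ((Finset.mem_sort _).1 hx)) i (by simpa using hi)
  omega

lemma getD_sort_zero (A : Finset ℕ) {i : ℕ} (hi : A.card ≤ i) :
    (A.sort (· ≤ ·)).getD i 0 = 0 := by
  apply List.getD_eq_default
  simpa using hi

lemma getD_sortIcc (k : ℕ) {i : ℕ} (hi : i < k) :
    ((Finset.Icc 1 k).sort (· ≤ ·)).getD i 0 = i + 1 := by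
  have hcard : (Finset.Icc 1 k).card = k := by simp
  have h1 := getD_sort_ge (Finset.Icc 1 k) (fun x hx => (Finset.mem_Icc.1 hx).1)
    (by omega : i < (Finset.Icc 1 k).card)
  have h2 := list_sorted_le k ((Finset.Icc 1 k).sort (· ≤ ·)) (Finset.sortedLT_sort _).pairwise
    (fun x hx => (Finset.mem_Icc.1 ((Finset.mem_sort _).1 hx)).2) i
    (by simpa [hcard] using hi)
  simp only [Finset.length_sort, hcard] at h2
  omega

lemma getD_sort_last_ge (A : Finset ℕ) (hA : ∀ x ∈ A, 1 ≤ x) {k : ℕ} (hk : A.card = k)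
    (hpos : 0 < k) (hne : A ≠ Finset.Icc 1 k) :
    k + 1 ≤ (A.sort (· ≤ ·)).getD (k - 1) 0 := by
  by_contra h
  push_neg at h
  set l := A.sort (· ≤ ·) with hl
  have hlen : l.length = k := by simp [hl, hk]
  have hsort : l.Pairwise (· < ·) := by rw [hl]; exact (Finset.sortedLT_sort A).pairwise
  have hget : l.getD (k-1) 0 = l[k-1]'(by omega) := List.getD_eq_getElem l 0 (by omega)
  rw [hget] at h
  have hsub : A ⊆ Finset.Icc 1 k := by
    intro x hx
    have hx' : x ∈ l := (Finset.mem_sort _).2 hx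
    obtain ⟨j, hj, hxe⟩ := List.getElem_of_mem hx'
    have hxk : x ≤ k := by
      rcases Nat.lt_or_ge j (k-1) with hjk | hjk
      · have h5 := (List.pairwise_iff_getElem.1 hsort) j (k-1)
          (by omega) (by omega) hjk
        rw [hxe] at h5
        omega
      · have hje : j = k - 1 := by omega
        subst hje
        rw [hxe] at h
        omega
    exact Finset.mem_Icc.2 ⟨hA x hx, hxk⟩
  exact hne (Finset.eq_of_subset_of_card_le hsub (by simp [hk]))


section CharA
variable {n : ℕ} {u v z : Equiv.Perm ℕ}

lemma PermOn.maps (h : PermOn n u) {i : ℕ} (hi : i ∈ Finset.Icc 1 n) :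
    u i ∈ Finset.Icc 1 n := by
  by_contra hc
  have h2 := h _ hc
  have h3 : u i = i := u.injective h2
  rw [h3] at hc
  exact hc hi

lemma length_sortedPrefix (w : Equiv.Perm ℕ) (k : ℕ) : (sortedPrefix ⇑w k).length = k := by
  unfold sortedPrefix
  rw [Finset.length_sort, Finset.card_image_of_injective _ w.injective]
  simp

lemma sortedPrefix_one (k : ℕ) :
    sortedPrefix (⇑(1 : Equiv.Perm ℕ)) k = (Finset.Icc 1 k).sort (· ≤ ·) := by
  unfold sortedPrefix
  simp

lemma prefix_mem_pos (h : PermOn n u) {k : ℕ} (hk : k ≤ n) :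
    ∀ x ∈ (Finset.Icc 1 k).image ⇑u, 1 ≤ x := by
  intro x hx
  obtain ⟨j, hj, rfl⟩ := Finset.mem_image.1 hx
  have hj' : j ∈ Finset.Icc 1 n := by
    rw [Finset.mem_Icc] at hj ⊢; omega
  have := h.maps hj'
  rw [Finset.mem_Icc] at this; omega

lemma bruhatLE_one (h : PermOn n z) : bruhatLE n 1 z := by
  intro k hk i
  rw [Finset.mem_Icc] at hk
  rw [sortedPrefix_one]
  rcases Nat.lt_or_ge i k with hik | hik
  · rw [getD_sortIcc k hik]
    have := getD_sort_ge ((Finset.Icc 1 k).image ⇑z) (prefix_mem_pos h hk.2)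
      (i := i) (by rw [Finset.card_image_of_injective _ z.injective]; simpa using hik)
    exact this
  · rw [getD_sort_zero _ (by simpa using hik)]
    omega

lemma bruhatLE_trans (h1 : bruhatLE n u v) (h2 : bruhatLE n v z) : bruhatLE n u z :=
  fun k hk i => le_trans (h1 k hk i) (h2 k hk i)

lemma prefix_image_eq (hu : PermOn n u) (hv : PermOn n v)
    (h1 : bruhatLE n u v) (h2 : bruhatLE n v u) {k : ℕ} (hk : k ∈ Finset.Icc 1 n) :
    (Finset.Icc 1 k).image ⇑u = (Finset.Icc 1 k).image ⇑v := by
  have hle : sortedPrefix ⇑u k = sortedPrefix ⇑v k := by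
    apply List.ext_getElem (by rw [length_sortedPrefix, length_sortedPrefix])
    intro i hi1 hi2
    have e1 : (sortedPrefix ⇑u k).getD i 0 = _ := List.getD_eq_getElem _ 0 hi1
    have e2 : (sortedPrefix ⇑v k).getD i 0 = _ := List.getD_eq_getElem _ 0 hi2
    rw [← e1, ← e2]
    exact le_antisymm (h1 k hk i) (h2 k hk i)
  ext x
  constructor
  · intro hx
    have : x ∈ sortedPrefix ⇑u k := (Finset.mem_sort _).2 hx
    rw [hle] at this
    exact (Finset.mem_sort _).1 this
  · intro hx
    have : x ∈ sortedPrefix ⇑v k := (Finset.mem_sort _).2 hx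
    rw [← hle] at this
    exact (Finset.mem_sort _).1 this

lemma bruhat_antisymm (hu : PermOn n u) (hv : PermOn n v)
    (h1 : bruhatLE n u v) (h2 : bruhatLE n v u) : u = v := by
  have key : ∀ k ∈ Finset.Icc 1 n, u k = v k := by
    intro k hk
    rw [Finset.mem_Icc] at hk
    have hmem : u k ∈ (Finset.Icc 1 k).image ⇑v := by
      rw [← prefix_image_eq hu hv h1 h2 (Finset.mem_Icc.2 hk)]
      exact Finset.mem_image_of_mem _ (Finset.mem_Icc.2 ⟨hk.1, le_refl k⟩)
    obtain ⟨j, hj, hje⟩ := Finset.mem_image.1 hmem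
    rw [Finset.mem_Icc] at hj
    rcases Nat.eq_or_lt_of_le hj.2 with hjk | hjk
    · rw [← hje, hjk]
    · exfalso
      have hk1 : k - 1 ∈ Finset.Icc 1 n := Finset.mem_Icc.2 ⟨by omega, by omega⟩
      have hmem2 : u k ∈ (Finset.Icc 1 (k-1)).image ⇑u := by
        rw [prefix_image_eq hu hv h1 h2 hk1, ← hje]
        exact Finset.mem_image_of_mem _ (Finset.mem_Icc.2 ⟨hj.1, by omega⟩)
      obtain ⟨j2, hj2, hje2⟩ := Finset.mem_image.1 hmem2
      have : j2 = k := u.injective hje2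
      rw [Finset.mem_Icc] at hj2
      omega
  apply Equiv.ext
  intro i
  by_cases hi : i ∈ Finset.Icc 1 n
  · exact key i hi
  · rw [hu i hi, hv i hi]

end CharA


section BT
variable {n : ℕ}

/-- the product of the commuting transpositions `(2j-1, 2j)`, `j ∈ T`, as a function. -/
def wTfun (T : Finset ℕ) (k : ℕ) : ℕ :=
  if k % 2 = 1 ∧ (k+1)/2 ∈ T then k + 1
  else if k % 2 = 0 ∧ 2 ≤ k ∧ k/2 ∈ T then k - 1
  else k

lemma wTfun_invol (T : Finset ℕ) : Function.Involutive (wTfun T) := by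
  intro k
  unfold wTfun
  by_cases h1 : k % 2 = 1 ∧ (k+1)/2 ∈ T
  · rw [if_pos h1]
    have e1 : ¬ ((k+1) % 2 = 1 ∧ (k+2)/2 ∈ T) := by
      intro hc; omega
    rw [if_neg e1]
    have e2 : (k+1) % 2 = 0 ∧ 2 ≤ k + 1 ∧ (k+1)/2 ∈ T := by
      refine ⟨by omega, by omega, ?_⟩
      have : (k+1)/2 = (k+1)/2 := rfl
      exact h1.2
    rw [if_pos e2]
    omega
  · rw [if_neg h1]
    by_cases h2 : k % 2 = 0 ∧ 2 ≤ k ∧ k/2 ∈ T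
    · rw [if_pos h2]
      have e1 : (k-1) % 2 = 1 ∧ ((k-1)+1)/2 ∈ T := by
        constructor
        · omega
        · have : (k-1)+1 = k := by omega
          rw [this]
          exact h2.2.2
      rw [if_pos e1]
      omega
    · rw [if_neg h2, if_neg h1, if_neg h2]

/-- the element `w_T` of the Boolean subgroup. -/
def wT (T : Finset ℕ) : Equiv.Perm ℕ := (wTfun_invol T).toPerm

lemma wT_apply (T : Finset ℕ) (k : ℕ) : wT T k = wTfun T k := rfl

lemma wT_odd (T : Finset ℕ) {j : ℕ} (hj : 1 ≤ j) :
    wT T (2*j - 1) = if j ∈ T then 2*j else 2*j - 1 := by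
  rw [wT_apply]
  unfold wTfun
  have h2 : (2*j - 1) % 2 = 1 := by omega
  have h3 : (2*j - 1 + 1)/2 = j := by omega
  by_cases hT : j ∈ T
  · rw [if_pos ⟨h2, by rw [h3]; exact hT⟩, if_pos hT]
    omega
  · rw [if_neg (by rw [h3]; exact fun hc => hT hc.2), if_neg hT]
    rw [if_neg (by omega)]

lemma wT_even (T : Finset ℕ) {j : ℕ} (hj : 1 ≤ j) :
    wT T (2*j) = if j ∈ T then 2*j - 1 else 2*j := by
  rw [wT_apply]
  unfold wTfun
  have h2 : ¬ ((2*j) % 2 = 1 ∧ (2*j+1)/2 ∈ T) := by intro hc; omega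
  rw [if_neg h2]
  have h3 : (2*j)/2 = j := by omega
  by_cases hT : j ∈ T
  · rw [if_pos ⟨by omega, by omega, by rw [h3]; exact hT⟩, if_pos hT]
  · rw [if_neg (by rw [h3]; exact fun hc => hT hc.2.2), if_neg hT]

lemma wT_permOn {T : Finset ℕ} (hT : T ⊆ Finset.Icc 1 (n/2)) : PermOn n (wT T) := by
  intro k hk
  rw [Finset.mem_Icc] at hk
  rw [wT_apply]
  unfold wTfun
  rw [if_neg, if_neg]
  · intro ⟨_, _, hc⟩
    have := Finset.mem_Icc.1 (hT hc)
    omega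
  · intro ⟨_, hc⟩
    have := Finset.mem_Icc.1 (hT hc)
    omega

end BT


section BT2
variable {n : ℕ} {T : Finset ℕ} {z : Equiv.Perm ℕ}

lemma wT_inv (T : Finset ℕ) : (wT T)⁻¹ = wT T := rfl

lemma wT_image_nonsplit (hT : T ⊆ Finset.Icc 1 (n/2)) {k : ℕ}
    (hk : ¬ (k % 2 = 1 ∧ (k+1)/2 ∈ T)) :
    (Finset.Icc 1 k).image ⇑(wT T) = Finset.Icc 1 k := by
  apply Finset.eq_of_subset_of_card_le
  · intro x hx
    obtain ⟨y, hy, rfl⟩ := Finset.mem_image.1 hx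
    rw [Finset.mem_Icc] at hy ⊢
    rw [wT_apply]
    unfold wTfun
    split_ifs with h1 h2
    · have hyk : y ≠ k := by
        rintro rfl
        exact hk h1
      omega
    · omega
    · omega
  · rw [Finset.card_image_of_injective _ (wT T).injective]

lemma wT_image_split (hT : T ⊆ Finset.Icc 1 (n/2)) {i : ℕ} (hi : i ∈ T) :
    (Finset.Icc 1 (2*i-1)).image ⇑(wT T) =
      insert (2*i) (Finset.Icc 1 (2*i-2)) := by
  have hi1 : 1 ≤ i := (Finset.mem_Icc.1 (hT hi)).1
  have hIcc : Finset.Icc 1 (2*i-1) = insert (2*i-1) (Finset.Icc 1 (2*i-2)) := by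
    ext x; simp only [Finset.mem_Icc, Finset.mem_insert]; omega
  rw [hIcc, Finset.image_insert, wT_odd T hi1, if_pos hi]
  congr 1
  exact wT_image_nonsplit hT (by
    intro hc
    omega)

lemma wT_image_split' (hT : T ⊆ Finset.Icc 1 (n/2)) {i : ℕ} (hi : i ∈ T) :
    (Finset.Icc 1 (2*i-1)).image ⇑(wT T) ≠ Finset.Icc 1 (2*i-1) := by
  rw [wT_image_split hT hi]
  intro hc
  have hi1 : 1 ≤ i := (Finset.mem_Icc.1 (hT hi)).1
  have : (2*i : ℕ) ∈ Finset.Icc 1 (2*i-1) := by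
    rw [← hc]; exact Finset.mem_insert_self _ _
  rw [Finset.mem_Icc] at this
  omega

/-- the sorted list of `insert (2i) (Icc 1 (2i-2))`. -/
lemma sort_insert_top {i : ℕ} (hi1 : 1 ≤ i) :
    (insert (2*i) (Finset.Icc 1 (2*i-2))).sort (· ≤ ·) =
      ((Finset.Icc 1 (2*i-2)).sort (· ≤ ·)) ++ [2*i] := by
  apply fun h1 h2 h3 => List.Perm.eq_of_pairwise' (r := (· ≤ · : ℕ → ℕ → Prop)) h2 h3 h1
  · refine List.Perm.trans (Finset.sort_perm_toList _ _) ?_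
    refine List.Perm.trans (Finset.toList_insert (by rw [Finset.mem_Icc]; omega)) ?_
    refine List.Perm.trans
      (List.Perm.cons _ (Finset.sort_perm_toList (Finset.Icc 1 (2*i-2)) (· ≤ ·)).symm) ?_
    exact (List.perm_append_singleton _ _).symm
  · exact Finset.pairwise_sort _ _
  · refine List.pairwise_append.2 ⟨Finset.pairwise_sort _ _, List.pairwise_singleton _ _, ?_⟩
    intro x hx y hy
    rw [List.mem_singleton] at hy
    subst hy
    have := Finset.mem_Icc.1 ((Finset.mem_sort _).1 hx)
    omega

lemma getD_split_lt {i j : ℕ} (hi1 : 1 ≤ i) (hj : j < 2*i - 2) :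
    ((insert (2*i) (Finset.Icc 1 (2*i-2))).sort (· ≤ ·)).getD j 0 = j + 1 := by
  rw [sort_insert_top hi1]
  have hlen : ((Finset.Icc 1 (2*i-2)).sort (· ≤ ·)).length = 2*i-2 := by simp
  rw [List.getD_eq_getElem _ _ (by rw [List.length_append, hlen]; simp; omega)]
  rw [List.getElem_append_left (by omega)]
  rw [← List.getD_eq_getElem _ 0 (by omega)]
  exact getD_sortIcc _ hj

lemma getD_split_last {i : ℕ} (hi1 : 1 ≤ i) :
    ((insert (2*i) (Finset.Icc 1 (2*i-2))).sort (· ≤ ·)).getD (2*i-2) 0 = 2*i := by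
  rw [sort_insert_top hi1]
  have hlen : ((Finset.Icc 1 (2*i-2)).sort (· ≤ ·)).length = 2*i-2 := by simp
  rw [List.getD_eq_getElem _ _ (by simp [List.length_append, hlen])]
  rw [List.getElem_append_right (by omega)]
  simp [hlen]

lemma card_insert_top {i : ℕ} (hi1 : 1 ≤ i) :
    (insert (2*i) (Finset.Icc 1 (2*i-2))).card = 2*i - 1 := by
  rw [Finset.card_insert_of_notMem (by rw [Finset.mem_Icc]; omega)]
  simp; omega

end BT2


section BT3
variable {n : ℕ} {T : Finset ℕ} {z : Equiv.Perm ℕ}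

lemma abs_helper {a b : ℕ} (h : a = b + 1 ∨ b = a + 1) : |(a:ℤ) - (b:ℤ)| ≤ 1 := by
  rw [abs_le]; omega

lemma wT_le (hz : PermOn n z) (hT : T ⊆ Finset.Icc 1 (n/2))
    (hS : ∀ i ∈ T, (Finset.Icc 1 (2*i-1)).image ⇑z ≠ Finset.Icc 1 (2*i-1)) :
    bruhatLE n (wT T) z := by
  intro k hk i
  rw [Finset.mem_Icc] at hk
  by_cases hsplit : k % 2 = 1 ∧ (k+1)/2 ∈ T
  · obtain ⟨hk2, hmem⟩ := hsplit
    have hj01 : 1 ≤ (k+1)/2 := (Finset.mem_Icc.1 (hT hmem)).1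
    set j0 := (k+1)/2 with hj0
    have hkj : k = 2*j0 - 1 := by omega
    unfold sortedPrefix
    rw [hkj, wT_image_split hT hmem]
    rcases Nat.lt_or_ge i (2*j0-2) with hi | hi
    · rw [getD_split_lt hj01 hi]
      exact getD_sort_ge ((Finset.Icc 1 (2*j0-1)).image ⇑z)
        (prefix_mem_pos hz (by omega))
        (by rw [Finset.card_image_of_injective _ z.injective]; simp; omega)
    rcases Nat.eq_or_lt_of_le hi with hi2 | hi2
    · rw [← hi2, getD_split_last hj01]
      have hlast := getD_sort_last_ge ((Finset.Icc 1 (2*j0-1)).image ⇑z)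
        (prefix_mem_pos hz (by omega)) (k := 2*j0-1)
        (by rw [Finset.card_image_of_injective _ z.injective]; simp) (by omega)
        (hS j0 hmem)
      have e : 2*j0-1-1 = 2*j0-2 := by omega
      rw [e] at hlast
      omega
    · rw [getD_sort_zero _ (by rw [card_insert_top hj01]; omega)]
      exact Nat.zero_le _
  · unfold sortedPrefix
    rw [wT_image_nonsplit hT hsplit]
    rcases Nat.lt_or_ge i k with hi | hi
    · rw [getD_sortIcc k hi]
      exact getD_sort_ge ((Finset.Icc 1 k).image ⇑z)
        (prefix_mem_pos hz hk.2)
        (by rw [Finset.card_image_of_injective _ z.injective]; simp; omega)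
    · rw [getD_sort_zero _ (by simp; omega)]
      exact Nat.zero_le _

lemma le_wT (hn : 1 ≤ n) (hT : T ⊆ Finset.Icc 1 (n/2)) (h : bruhatLE n (wT T) z) :
    ∀ i ∈ T, (Finset.Icc 1 (2*i-1)).image ⇑z ≠ Finset.Icc 1 (2*i-1) := by
  intro i hi hc
  obtain ⟨hi1, hi2⟩ := Finset.mem_Icc.1 (hT hi)
  have h2n : 2 * (n/2) ≤ n := Nat.mul_div_le n 2 |>.trans (le_refl n) |>.trans (le_refl n)
  have hk : 2*i-1 ∈ Finset.Icc 1 n := by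
    rw [Finset.mem_Icc]
    constructor
    · omega
    · have : 2*i ≤ 2*(n/2) := by omega
      omega
  have hb := h (2*i-1) hk (2*i-2)
  unfold sortedPrefix at hb
  rw [wT_image_split hT hi, getD_split_last hi1, hc, getD_sortIcc _ (by omega)] at hb
  omega

lemma wT_wachs (hn : 1 ≤ n) (hT : T ⊆ Finset.Icc 1 (n/2)) : IsWachs n (wT T) := by
  refine ⟨wT_permOn hT, ?_⟩
  intro i hi
  rw [Finset.mem_Icc] at hi
  rw [wT_inv]
  by_cases h2 : i % 2 = 0
  · have hstar : star n i = i - 1 := by unfold star; rw [if_pos h2]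
    rw [hstar]
    have hj : 1 ≤ i/2 := by omega
    have ei : i = 2*(i/2) := by omega
    have ei1 : i - 1 = 2*(i/2) - 1 := by omega
    have v1 := wT_even T hj
    rw [← ei1, ← ei] at v1
    have v2 := wT_odd T hj
    rw [← ei1, ← ei] at v2
    rw [v1, v2]
    by_cases hjT : i/2 ∈ T
    · rw [if_pos hjT, if_pos hjT]
      exact abs_helper (Or.inr (by omega))
    · rw [if_neg hjT, if_neg hjT]
      exact abs_helper (Or.inl (by omega))
  · have hstar : star n i = i + 1 := by
      unfold star; rw [if_neg h2, if_pos (by omega)]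
    rw [hstar]
    have hj : 1 ≤ (i+1)/2 := by omega
    have ei : i = 2*((i+1)/2) - 1 := by omega
    have ei1 : i + 1 = 2*((i+1)/2) := by omega
    have v1 := wT_odd T hj
    rw [← ei, ← ei1] at v1
    have v2 := wT_even T hj
    rw [← ei, ← ei1] at v2
    rw [v1, v2]
    by_cases hjT : (i+1)/2 ∈ T
    · rw [if_pos hjT, if_pos hjT]
      exact abs_helper (Or.inl (by omega))
    · rw [if_neg hjT, if_neg hjT]
      exact abs_helper (Or.inr (by omega))

/-- the set `S(z)` of odd positions with non-standard prefix. -/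
def SSet (n : ℕ) (z : Equiv.Perm ℕ) : Finset ℕ :=
  (Finset.Icc 1 (n/2)).filter
    (fun i => (Finset.Icc 1 (2*i-1)).image ⇑z ≠ Finset.Icc 1 (2*i-1))

lemma SSet_subset : SSet n z ⊆ Finset.Icc 1 (n/2) := Finset.filter_subset _ _

lemma SSet_wT (hT : T ⊆ Finset.Icc 1 (n/2)) : SSet n (wT T) = T := by
  ext i
  unfold SSet
  rw [Finset.mem_filter]
  constructor
  · rintro ⟨hi, hne⟩
    by_contra hiT
    apply hne
    refine wT_image_nonsplit hT ?_
    rintro ⟨hodd, hmem⟩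
    have hi1 : 1 ≤ i := (Finset.mem_Icc.1 hi).1
    have : (2*i-1+1)/2 = i := by omega
    rw [this] at hmem
    exact hiT hmem
  · intro hi
    exact ⟨hT hi, wT_image_split' hT hi⟩

end BT3


section LenLemmas
variable {n : ℕ} {T : Finset ℕ}

lemma sum_Icc_sub (n : ℕ) : ∑ x ∈ Finset.Icc 1 n, (n - x) = n.choose 2 := by
  induction n with
  | zero => simp
  | succ n ih =>
    rw [Finset.sum_Icc_succ_top (by omega)]
    have e1 : ∑ x ∈ Finset.Icc 1 n, (n + 1 - x) = ∑ x ∈ Finset.Icc 1 n, ((n - x) + 1) :=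
      Finset.sum_congr rfl (fun x hx => by rw [Finset.mem_Icc] at hx; omega)
    have e2 : (n+1).choose 2 = n.choose 2 + n := by
      simp [Nat.choose_succ_succ, Nat.choose_one_right]; omega
    rw [e1, Finset.sum_add_distrib, Finset.sum_const, ih, e2]
    simp

lemma pairCount (n : ℕ) :
    (((Finset.Icc 1 n) ×ˢ (Finset.Icc 1 n)).filter (fun p : ℕ × ℕ => p.1 < p.2)).card
      = n.choose 2 := by
  rw [Finset.card_filter, Finset.sum_product]
  have inner : ∀ x ∈ Finset.Icc 1 n,
      (∑ y ∈ Finset.Icc 1 n, if x < y then 1 else 0) = n - x := by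
    intro x hx
    rw [← Finset.card_filter]
    have : (Finset.Icc 1 n).filter (fun y => x < y) = Finset.Icc (x+1) n := by
      ext y; simp only [Finset.mem_filter, Finset.mem_Icc]; omega
    rw [this, Nat.card_Icc]
    omega
  rw [Finset.sum_congr rfl inner, sum_Icc_sub]

lemma wT_cases (T : Finset ℕ) (k : ℕ) :
    (k % 2 = 1 ∧ (k+1)/2 ∈ T ∧ wT T k = k+1) ∨
    (k % 2 = 0 ∧ 2 ≤ k ∧ k/2 ∈ T ∧ wT T k = k-1) ∨ wT T k = k := by
  rw [wT_apply]
  unfold wTfun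
  split_ifs with h1 h2
  · exact Or.inl ⟨h1.1, h1.2, rfl⟩
  · exact Or.inr (Or.inl ⟨h2.1, h2.2.1, h2.2.2, rfl⟩)
  · exact Or.inr (Or.inr rfl)

lemma len_wT (hT : T ⊆ Finset.Icc 1 (n/2)) : len n ⇑(wT T) = T.card := by
  unfold len
  have himg : ((Finset.Icc 1 n) ×ˢ (Finset.Icc 1 n)).filter
      (fun p => p.1 < p.2 ∧ wT T p.2 < wT T p.1)
      = T.image (fun j => (2*j-1, 2*j)) := by
    ext ⟨p1, p2⟩
    simp only [Finset.mem_filter, Finset.mem_product, Finset.mem_image, Finset.mem_Icc,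
      Prod.mk.injEq]
    constructor
    · rintro ⟨⟨hp1, hp2⟩, hlt, hinv⟩
      rcases wT_cases T p1 with ⟨hA1, hA2, hA3⟩ | ⟨hA1, hA2, hA3, hA4⟩ | hA3 <;>
        rcases wT_cases T p2 with ⟨hB1, hB2, hB3⟩ | ⟨hB1, hB2, hB3, hB4⟩ | hB3
      · exfalso; omega
      · exact ⟨p2/2, hB3, by omega, by omega⟩
      · exfalso; omega
      all_goals exfalso; omega
    · rintro ⟨j, hj, hj1e, hj2e⟩
      obtain ⟨hj1, hj2⟩ := Finset.mem_Icc.1 (hT hj)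
      have h1 : wT T (2*j-1) = 2*j := by rw [wT_odd T hj1, if_pos hj]
      have h2 : wT T (2*j) = 2*j-1 := by rw [wT_even T hj1, if_pos hj]
      rw [← hj1e, ← hj2e]
      refine ⟨⟨?_, ?_⟩, by omega, ?_⟩
      · omega
      · omega
      · rw [h1, h2]
        omega
  rw [himg, Finset.card_image_of_injective]
  intro a b hab
  simp only [Prod.mk.injEq] at hab
  omega

lemma wT_fix_top (hodd : n % 2 = 1) (hT : T ⊆ Finset.Icc 1 (n/2)) : wT T n = n := by
  rw [wT_apply]
  unfold wTfun
  rw [if_neg, if_neg]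
  · rintro ⟨h1, _, h2⟩
    have := Finset.mem_Icc.1 (hT h2)
    omega
  · rintro ⟨h1, h2⟩
    have := Finset.mem_Icc.1 (hT h2)
    omega

lemma fMap_wT (hT : T ⊆ Finset.Icc 1 (n/2)) {i : ℕ} (hi : i ∈ Finset.Icc 1 (n/2)) :
    fMap n (wT T) i = i := by
  obtain ⟨hi1, hi2⟩ := Finset.mem_Icc.1 hi
  have hval : wT T (2*i-1) + 1 = 2*i ∨ wT T (2*i-1) + 1 = 2*i+1 := by
    rw [wT_odd T hi1]
    by_cases hiT : i ∈ T
    · rw [if_pos hiT]; omega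
    · rw [if_neg hiT]; omega
  unfold fMap
  by_cases hpar : n % 2 = 0
  · rw [if_pos hpar]
    omega
  · rw [if_neg hpar]
    unfold chiVal pos
    rw [wT_inv, wT_fix_top (by omega) hT]
    rw [if_pos (by omega)]
    omega

lemma len_fMap_wT (hT : T ⊆ Finset.Icc 1 (n/2)) : len (n/2) (fMap n (wT T)) = 0 := by
  unfold len
  rw [Finset.card_eq_zero, Finset.filter_eq_empty_iff]
  intro p hp
  rw [Finset.mem_product] at hp
  rw [fMap_wT hT hp.1, fMap_wT hT hp.2]
  omega

lemma lenW_wT (hT : T ⊆ Finset.Icc 1 (n/2)) : lenW n (wT T) = T.card := by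
  unfold lenW
  rw [len_wT hT, len_fMap_wT hT]
  omega

lemma rev_apply_in (hk : 1 ≤ n) {k : ℕ} (h1 : 1 ≤ k) (h2 : k ≤ n) : rev n k = n + 1 - k := by
  show revFun n k = _
  unfold revFun
  rw [if_pos ⟨h1, h2⟩]

lemma rev_inv : (rev n)⁻¹ = rev n := rfl

lemma len_rev (hn : 1 ≤ n) : len n ⇑(rev n) = n.choose 2 := by
  unfold len
  rw [← pairCount n]
  apply congrArg Finset.card
  apply Finset.filter_congr
  intro p hp
  rw [Finset.mem_product, Finset.mem_Icc, Finset.mem_Icc] at hp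
  constructor
  · intro h; exact h.1
  · intro h
    refine ⟨h, ?_⟩
    rw [rev_apply_in hn hp.1.1 hp.1.2, rev_apply_in hn hp.2.1 hp.2.2]
    omega

lemma fMap_rev (hn : 1 ≤ n) {i : ℕ} (hi : i ∈ Finset.Icc 1 (n/2)) :
    fMap n (rev n) i = n/2 + 1 - i := by
  obtain ⟨hi1, hi2⟩ := Finset.mem_Icc.1 hi
  unfold fMap
  by_cases hpar : n % 2 = 0
  · rw [if_pos hpar]
    rw [rev_apply_in hn (by omega) (by omega)]
    omega
  · rw [if_neg hpar]
    unfold chiVal pos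
    rw [rev_inv, rev_apply_in hn (by omega) (by omega)]
    have hne : ¬ (2*i - 1 < n + 1 - n) := by omega
    rw [if_neg hne]
    have e : 2*i - 1 + 1 = 2*i := by omega
    rw [e, rev_apply_in hn (by omega) (by omega)]
    omega

lemma len_fMap_rev (hn : 1 ≤ n) : len (n/2) (fMap n (rev n)) = (n/2).choose 2 := by
  unfold len
  rw [← pairCount (n/2)]
  apply congrArg Finset.card
  apply Finset.filter_congr
  intro p hp
  rw [Finset.mem_product, Finset.mem_Icc, Finset.mem_Icc] at hp
  constructor
  · intro h; exact h.1
  · intro h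
    refine ⟨h, ?_⟩
    rw [fMap_rev hn (Finset.mem_Icc.2 hp.1), fMap_rev hn (Finset.mem_Icc.2 hp.2)]
    omega

lemma lenW_rev (hn : 1 ≤ n) : lenW n (rev n) = n.choose 2 - (n/2).choose 2 := by
  unfold lenW
  rw [len_rev hn, len_fMap_rev hn]

lemma wT_empty : wT ∅ = 1 := by
  apply Equiv.ext
  intro k
  rw [wT_apply]
  unfold wTfun
  simp

lemma one_wachs (hn : 1 ≤ n) : IsWachs n 1 := by
  constructor
  · intro i _; rfl
  · intro i hi
    rw [Finset.mem_Icc] at hi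
    have e : ∀ j : ℕ, (1 : Equiv.Perm ℕ)⁻¹ j = j := fun j => rfl
    rw [e, e]
    unfold star
    by_cases h2 : i % 2 = 0
    · rw [if_pos h2]
      exact abs_helper (Or.inl (by omega))
    · rw [if_neg h2, if_pos (by omega)]
      exact abs_helper (Or.inr (by omega))

end LenLemmas


section Fin1
variable {n : ℕ} {z : Equiv.Perm ℕ}

lemma permOn_finite (n : ℕ) : {z : Equiv.Perm ℕ | PermOn n z}.Finite := by
  rw [← Set.finite_coe_iff]
  let F : {z : Equiv.Perm ℕ | PermOn n z} →
      ((Finset.Icc 1 n : Finset ℕ) → (Finset.Icc 1 n : Finset ℕ)) :=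
    fun z i => ⟨z.1 i.1, PermOn.maps z.2 i.2⟩
  have hinj : Function.Injective F := by
    intro a b hab
    apply Subtype.ext
    apply Equiv.ext
    intro i
    by_cases hi : i ∈ Finset.Icc 1 n
    · have := congrFun hab ⟨i, hi⟩
      simpa [F, Subtype.ext_iff] using this
    · rw [a.2 i hi, b.2 i hi]
  exact Finite.of_injective F hinj

lemma wachs_finite (n : ℕ) : {z : Equiv.Perm ℕ | IsWachs n z}.Finite :=
  (permOn_finite n).subset (fun _ hz => hz.1)

/-- the Boolean subgroup, as a finset. -/
noncomputable def Bset (n : ℕ) : Finset (Equiv.Perm ℕ) :=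
  ((Finset.Icc 1 (n/2)).powerset).image wT

noncomputable def nu (n : ℕ) (z : Equiv.Perm ℕ) : ℤ :=
  if z ∈ Bset n then (-1)^(len n ⇑z) else 0

lemma wT_injOn {T U : Finset ℕ} (hT : T ⊆ Finset.Icc 1 (n/2))
    (hU : U ⊆ Finset.Icc 1 (n/2)) (h : wT T = wT U) : T = U := by
  have key : ∀ V W : Finset ℕ, V ⊆ Finset.Icc 1 (n/2) → wT V = wT W →
      ∀ i ∈ V, i ∈ W := by
    intro V W hV hVW i hi
    have hi1 : 1 ≤ i := (Finset.mem_Icc.1 (hV hi)).1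
    have e1 : wT V (2*i-1) = 2*i := by rw [wT_odd V hi1, if_pos hi]
    rw [hVW, wT_odd W hi1] at e1
    by_contra hiW
    rw [if_neg hiW] at e1
    omega
  ext i
  exact ⟨fun hi => key T U hT h i hi, fun hi => key U T hU h.symm i hi⟩

lemma image_Icc_top (hz : PermOn n z) : (Finset.Icc 1 n).image ⇑z = Finset.Icc 1 n := by
  apply Finset.eq_of_subset_of_card_le
  · intro x hx
    obtain ⟨y, hy, rfl⟩ := Finset.mem_image.1 hx
    exact hz.maps hy
  · rw [Finset.card_image_of_injective _ z.injective]

lemma not_mem_prefix (hlt : ∀ j ∈ Finset.Icc 1 (k : ℕ), j < i) :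
    z i ∉ (Finset.Icc 1 k).image ⇑z := by
  intro hc
  obtain ⟨j, hj, hje⟩ := Finset.mem_image.1 hc
  have := z.injective hje
  have := hlt j hj
  omega

lemma SSet_empty_eq_one (hn : 1 ≤ n) (hz : IsWachs n z) (hS : SSet n z = ∅) : z = 1 := by
  have hstd : ∀ i ∈ Finset.Icc 1 (n/2),
      (Finset.Icc 1 (2*i-1)).image ⇑z = Finset.Icc 1 (2*i-1) := by
    intro i hi
    have := Finset.filter_eq_empty_iff.1 hS hi
    by_contra hc
    exact this hc
  have hfull := image_Icc_top hz.1
  -- the two values in a window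
  have window : ∀ a b : ℕ, (Finset.Icc 1 a).image ⇑z = Finset.Icc 1 a →
      (Finset.Icc 1 b).image ⇑z = Finset.Icc 1 b → ∀ j, a < j → j ≤ b →
      (a < z j ∧ z j ≤ b) := by
    intro a b ha hb j hj1 hj2
    have hmem : z j ∈ Finset.Icc 1 b := by
      rw [← hb]
      exact Finset.mem_image_of_mem _ (Finset.mem_Icc.2 ⟨by omega, hj2⟩)
    have hnmem : z j ∉ Finset.Icc 1 a := by
      rw [← ha]
      exact not_mem_prefix (fun j2 hj2 => by rw [Finset.mem_Icc] at hj2; omega)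
    rw [Finset.mem_Icc] at hmem hnmem
    omega
  have claim1 : ∀ i : ℕ, 1 ≤ i → 2*i+1 ≤ n → z (2*i) = 2*i ∧ z (2*i+1) = 2*i+1 := by
    intro i hi1 hin
    have hP1 : (Finset.Icc 1 (2*i-1)).image ⇑z = Finset.Icc 1 (2*i-1) :=
      hstd i (Finset.mem_Icc.2 ⟨hi1, by omega⟩)
    have hP2 : (Finset.Icc 1 (2*i+1)).image ⇑z = Finset.Icc 1 (2*i+1) := by
      rcases Nat.eq_or_lt_of_le hin with he | hlt
      · rw [he]; exact hfull
      · have : 2*i+1 = 2*(i+1)-1 := by omega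
        rw [this]
        exact hstd (i+1) (Finset.mem_Icc.2 ⟨by omega, by omega⟩)
    have w1 := window (2*i-1) (2*i+1) hP1 hP2 (2*i) (by omega) (by omega)
    have w2 := window (2*i-1) (2*i+1) hP1 hP2 (2*i+1) (by omega) (by omega)
    have hne : z (2*i) ≠ z (2*i+1) := fun hc => by
      have := z.injective hc; omega
    rcases Nat.eq_or_lt_of_le w1.2 with hcase | hcase
    · -- z (2i) = 2i+1, so z(2i+1) = 2i
      exfalso
      have hz2 : z (2*i+1) = 2*i := by omega
      have hi2n : (2*i : ℕ) ∈ Finset.Icc 1 (n-1) := Finset.mem_Icc.2 ⟨by omega, by omega⟩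
      have habs := hz.2 (2*i) hi2n
      have hstar : star n (2*i) = 2*i - 1 := by
        unfold star; rw [if_pos (by omega)]
      rw [hstar] at habs
      have hinv1 : z⁻¹ (2*i) = 2*i+1 :=
        z.injective (by rw [Equiv.Perm.coe_inv, Equiv.apply_symm_apply, hz2])
      have hmem3 : (2*i-1 : ℕ) ∈ (Finset.Icc 1 (2*i-1)).image ⇑z := by
        rw [hP1]; exact Finset.mem_Icc.2 ⟨by omega, le_refl _⟩
      obtain ⟨j, hj, hje⟩ := Finset.mem_image.1 hmem3
      have hinv2 : z⁻¹ (2*i-1) = j :=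
        z.injective (by rw [Equiv.Perm.coe_inv, Equiv.apply_symm_apply]; exact hje.symm)
      rw [hinv1, hinv2] at habs
      rw [Finset.mem_Icc] at hj
      rw [abs_le] at habs
      omega
    · have hz1 : z (2*i) = 2*i := by omega
      refine ⟨hz1, ?_⟩
      have : z (2*i+1) ≠ 2*i := by
        intro hc
        rw [← hz1] at hc
        have := z.injective hc
        omega
      omega
  have claim2 : z 1 = 1 := by
    have h11 : (Finset.Icc 1 1).image ⇑z = Finset.Icc 1 1 := by
      rcases Nat.eq_or_lt_of_le hn with he | h2
      · rw [← he] at hfull; exact hfull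
      · have : (1:ℕ) = 2*1-1 := by omega
        rw [this]
        exact hstd 1 (Finset.mem_Icc.2 ⟨le_refl _, by omega⟩)
    have : z 1 ∈ Finset.Icc 1 1 := by
      rw [← h11]; exact Finset.mem_image_of_mem _ (Finset.mem_Icc.2 ⟨le_refl _, le_refl _⟩)
    rw [Finset.mem_Icc] at this
    omega
  have claim3 : n % 2 = 0 → 2 ≤ n → z n = n := by
    intro hpar h2
    have hP1 : (Finset.Icc 1 (n-1)).image ⇑z = Finset.Icc 1 (n-1) := by
      have e : n - 1 = 2*(n/2) - 1 := by omega
      rw [e]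
      exact hstd (n/2) (Finset.mem_Icc.2 ⟨by omega, le_refl _⟩)
    have := window (n-1) n hP1 hfull n (by omega) (le_refl _)
    omega
  apply Equiv.ext
  intro k
  by_cases hk : k ∈ Finset.Icc 1 n
  · rw [Finset.mem_Icc] at hk
    show z k = k
    rcases Nat.lt_or_ge k 2 with hk2 | hk2
    · have : k = 1 := by omega
      rw [this, claim2]
    by_cases hpar : k % 2 = 0
    · rcases Nat.lt_or_ge k n with hkn | hkn
      · have e : k = 2*(k/2) := by omega
        rw [e]
        exact (claim1 (k/2) (by omega) (by omega)).1
      · have hkn' : k = n := by omega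
        subst hkn'
        exact claim3 hpar hk2
    · have e : k = 2*(k/2)+1 := by omega
      rw [e]
      exact (claim1 (k/2) (by omega) (by omega)).2
  · exact hz.1 k hk

end Fin1


section Main
variable {n : ℕ}

lemma bruhatLE_refl (z : Equiv.Perm ℕ) : bruhatLE n z z := fun _ _ _ => le_refl _

lemma len_one : len n ⇑(1 : Equiv.Perm ℕ) = 0 := by
  unfold len
  rw [Finset.card_eq_zero, Finset.filter_eq_empty_iff]
  intro p hp
  simp only [Equiv.Perm.coe_one, id_eq]
  omega

lemma one_mem_Bset : (1 : Equiv.Perm ℕ) ∈ Bset n := by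
  unfold Bset
  rw [Finset.mem_image]
  exact ⟨∅, Finset.mem_powerset.2 (Finset.empty_subset _), wT_empty⟩

lemma mem_Bset {z : Equiv.Perm ℕ} (hz : z ∈ Bset n) :
    ∃ T, T ⊆ Finset.Icc 1 (n/2) ∧ wT T = z := by
  unfold Bset at hz
  rw [Finset.mem_image] at hz
  obtain ⟨T, hT, he⟩ := hz
  exact ⟨T, Finset.mem_powerset.1 hT, he⟩

lemma interval_inter_Bset (hn : 1 ≤ n) {z : Equiv.Perm ℕ} (hz : IsWachs n z) :
    ((wachs_finite n).toFinset.filter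
      (fun w => bruhatLE n 1 w ∧ bruhatLE n w z)).filter (· ∈ Bset n)
      = (SSet n z).powerset.image wT := by
  ext w
  simp only [Finset.mem_filter, Set.Finite.mem_toFinset, Set.mem_setOf_eq, Finset.mem_image,
    Finset.mem_powerset]
  constructor
  · rintro ⟨⟨hwW, h1w, hwz⟩, hwB⟩
    obtain ⟨T, hT, rfl⟩ := mem_Bset hwB
    refine ⟨T, ?_, rfl⟩
    intro i hi
    unfold SSet
    rw [Finset.mem_filter]
    exact ⟨hT hi, le_wT hn hT hwz i hi⟩
  · rintro ⟨T, hTs, rfl⟩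
    have hT : T ⊆ Finset.Icc 1 (n/2) := hTs.trans SSet_subset
    have hS : ∀ i ∈ T, (Finset.Icc 1 (2*i-1)).image ⇑z ≠ Finset.Icc 1 (2*i-1) := by
      intro i hi
      have := hTs hi
      unfold SSet at this
      rw [Finset.mem_filter] at this
      exact this.2
    refine ⟨⟨wT_wachs hn hT, bruhatLE_one (wT_permOn hT), wT_le hz.1 hT hS⟩, ?_⟩
    unfold Bset
    rw [Finset.mem_image]
    exact ⟨T, Finset.mem_powerset.2 hT, rfl⟩

lemma mobius_eq_nu (hn : 1 ≤ n)
    (μ : Equiv.Perm ℕ → Equiv.Perm ℕ → ℤ)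
    (hμ1 : ∀ x, IsWachs n x → μ x x = 1)
    (hμ2 : ∀ x y, IsWachs n x → IsWachs n y → bruhatLT n x y →
      (∑ᶠ z ∈ {z : Equiv.Perm ℕ |
          IsWachs n z ∧ bruhatLE n x z ∧ bruhatLE n z y}, μ x z) = 0) :
    ∀ z, IsWachs n z → μ 1 z = nu n z := by
  classical
  set W := (wachs_finite n).toFinset with hW
  have hWmem : ∀ w : Equiv.Perm ℕ, w ∈ W ↔ IsWachs n w := by
    intro w
    rw [hW, Set.Finite.mem_toFinset, Set.mem_setOf_eq]
  set d : Equiv.Perm ℕ → ℕ := fun z => (W.filter (fun w => bruhatLT n w z)).card with hd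
  have d_lt : ∀ w z : Equiv.Perm ℕ, IsWachs n w → IsWachs n z → bruhatLT n w z →
      d w < d z := by
    intro w z hw hz hwz
    apply Finset.card_lt_card
    constructor
    · intro x hx
      rw [Finset.mem_filter] at hx ⊢
      obtain ⟨hxW, hxw⟩ := hx
      refine ⟨hxW, bruhatLE_trans hxw.1 hwz.1, ?_⟩
      intro hc
      subst hc
      exact hwz.2 (bruhat_antisymm hw.1 (((hWmem x).1 hxW).1) hwz.1 hxw.1)
    · intro hc
      have hwmem : w ∈ W.filter (fun v => bruhatLT n v z) :=
        Finset.mem_filter.2 ⟨(hWmem w).2 hw, hwz⟩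
      have := hc hwmem
      rw [Finset.mem_filter] at this
      exact this.2.2 rfl
  suffices main : ∀ N z, IsWachs n z → d z = N → μ 1 z = nu n z by
    intro z hz
    exact main (d z) z hz rfl
  intro N
  induction N using Nat.strong_induction_on with
  | _ N ih =>
  intro z hz hdz
  by_cases h1 : z = 1
  · subst h1
    rw [hμ1 1 (one_wachs hn)]
    unfold nu
    rw [if_pos one_mem_Bset, len_one]
    norm_num
  · have hlt : bruhatLT n 1 z := ⟨bruhatLE_one hz.1, fun hc => h1 hc.symm⟩
    have hrec := hμ2 1 z (one_wachs hn) hz hlt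
    set Ifin := W.filter (fun w => bruhatLE n 1 w ∧ bruhatLE n w z) with hIfin
    have hset : {w : Equiv.Perm ℕ | IsWachs n w ∧ bruhatLE n 1 w ∧ bruhatLE n w z}
        = ↑Ifin := by
      ext w
      simp only [hIfin, Finset.coe_filter, Set.mem_setOf_eq, hWmem]
    rw [hset, finsum_mem_coe_finset] at hrec
    have hzI : z ∈ Ifin :=
      Finset.mem_filter.2 ⟨(hWmem z).2 hz, bruhatLE_one hz.1, bruhatLE_refl z⟩
    rw [← Finset.add_sum_erase _ _ hzI] at hrec
    have hsum_eq : ∑ w ∈ Ifin.erase z, μ 1 w = ∑ w ∈ Ifin.erase z, nu n w := by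
      apply Finset.sum_congr rfl
      intro w hw
      rw [Finset.mem_erase] at hw
      obtain ⟨hwne, hwI⟩ := hw
      rw [hIfin, Finset.mem_filter] at hwI
      obtain ⟨hwW, h1w, hwz⟩ := hwI
      have hwwachs := (hWmem w).1 hwW
      have hwlt : bruhatLT n w z := ⟨hwz, hwne⟩
      exact ih (d w) (hdz ▸ d_lt w z hwwachs hz hwlt) w hwwachs rfl
    rw [hsum_eq] at hrec
    have hfilter : ∑ w ∈ Ifin.erase z, nu n w
        = ∑ w ∈ ((SSet n z).powerset.image wT).erase z, (-1 : ℤ)^(len n ⇑w) := by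
      unfold nu
      rw [← Finset.sum_filter, Finset.filter_erase, interval_inter_Bset hn hz]
    have himgsum : ∑ w ∈ (SSet n z).powerset.image wT, (-1 : ℤ)^(len n ⇑w)
        = ∑ T ∈ (SSet n z).powerset, (-1 : ℤ)^T.card := by
      rw [Finset.sum_image]
      · apply Finset.sum_congr rfl
        intro T hT
        rw [len_wT ((Finset.mem_powerset.1 hT).trans SSet_subset)]
      · intro T hT U hU he
        exact wT_injOn ((Finset.mem_powerset.1 hT).trans SSet_subset)
          ((Finset.mem_powerset.1 hU).trans SSet_subset) he
    by_cases hzB : z ∈ Bset n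
    · obtain ⟨S0, hS0, rfl⟩ := mem_Bset hzB
      have hSz : SSet n (wT S0) = S0 := SSet_wT hS0
      have hS0ne : S0 ≠ ∅ := by
        intro hc
        subst hc
        exact h1 wT_empty
      have hzimg : wT S0 ∈ (SSet n (wT S0)).powerset.image wT := by
        rw [Finset.mem_image]
        exact ⟨S0, by rw [hSz]; exact Finset.mem_powerset.2 (le_refl _), rfl⟩
      rw [hfilter, Finset.sum_erase_eq_sub hzimg, himgsum, hSz,
        Finset.sum_powerset_neg_one_pow_card, if_neg hS0ne, len_wT hS0] at hrec
      unfold nu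
      rw [if_pos hzB, len_wT hS0]
      omega
    · have hzimg : z ∉ (SSet n z).powerset.image wT := by
        intro hc
        rw [Finset.mem_image] at hc
        obtain ⟨T, hT, he⟩ := hc
        apply hzB
        unfold Bset
        rw [Finset.mem_image]
        exact ⟨T, Finset.mem_powerset.2
          ((Finset.mem_powerset.1 hT).trans SSet_subset), he⟩
      have hSne : SSet n z ≠ ∅ := fun hc => h1 (SSet_empty_eq_one hn hz hc)
      rw [hfilter, Finset.erase_eq_of_notMem hzimg, himgsum,
        Finset.sum_powerset_neg_one_pow_card, if_neg hSne] at hrec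
      unfold nu
      rw [if_neg hzB]
      omega

end Main

-- MORE_AUX

open Polynomial in
/-- Corollary `charpolyA`. The characteristic polynomial of the
graded poset `(W(S_n),≤)` is `(x-1)^{⌊n/2⌋} x^{C(n,2) - C(⌊n/2⌋+1,2)}`.  Here `μ`
is any function satisfying the defining recurrence of the Möbius function of
`(W(S_n),≤)`, and the rank function is `ℓ_W`, with maximum `rev n = n…321`. -/
theorem wachs_characteristic_polynomial (n : ℕ) (hn : 1 ≤ n) :
    ∀ μ : Equiv.Perm ℕ → Equiv.Perm ℕ → ℤ,
      (∀ x, IsWachs n x → μ x x = 1) →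
      (∀ x y, IsWachs n x → IsWachs n y → bruhatLT n x y →
        (∑ᶠ z ∈ {z : Equiv.Perm ℕ |
            IsWachs n z ∧ bruhatLE n x z ∧ bruhatLE n z y}, μ x z) = 0) →
      (∑ᶠ z ∈ {z : Equiv.Perm ℕ | IsWachs n z},
          Polynomial.C (μ 1 z) * (X : Polynomial ℤ) ^ (lenW n (rev n) - lenW n z)) =
        (X - 1) ^ (n / 2) * X ^ (n.choose 2 - (n / 2 + 1).choose 2) := by
  intro μ hμ1 hμ2
  have hmain := mobius_eq_nu hn μ hμ1 hμ2
  set m := n/2 with hm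
  set W := (wachs_finite n).toFinset with hW
  have hWmem : ∀ w : Equiv.Perm ℕ, w ∈ W ↔ IsWachs n w := fun w => by
    rw [hW, Set.Finite.mem_toFinset, Set.mem_setOf_eq]
  have hsetW : {z : Equiv.Perm ℕ | IsWachs n z} = ↑W := by
    rw [hW, Set.Finite.coe_toFinset]
  rw [hsetW, finsum_mem_coe_finset]
  have step1 : ∀ z ∈ W, Polynomial.C (μ 1 z) * (X : Polynomial ℤ)^(lenW n (rev n) - lenW n z)
      = Polynomial.C (nu n z) * (X : Polynomial ℤ)^(lenW n (rev n) - lenW n z) := by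
    intro z hz
    rw [hmain z ((hWmem z).1 hz)]
  rw [Finset.sum_congr rfl step1]
  have hBW : Bset n ⊆ W := by
    intro w hw
    obtain ⟨T, hT, rfl⟩ := mem_Bset hw
    exact (hWmem _).2 (wT_wachs hn hT)
  rw [← Finset.sum_subset hBW (fun x _ hnx => by
    unfold nu
    rw [if_neg hnx]
    simp)]
  unfold Bset
  rw [Finset.sum_image (fun T hT U hU he =>
    wT_injOn (Finset.mem_powerset.1 hT) (Finset.mem_powerset.1 hU) he)]
  have hc2 : (m+1).choose 2 = m.choose 2 + m := by
    simp [Nat.choose_succ_succ, Nat.choose_one_right]; omega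
  have hcle : (m+1).choose 2 ≤ n.choose 2 := Nat.choose_le_choose 2 (by omega)
  have step2 : ∀ T ∈ (Finset.Icc 1 m).powerset,
      Polynomial.C (nu n (wT T)) * (X : Polynomial ℤ)^(lenW n (rev n) - lenW n (wT T))
      = ((Polynomial.C (-1:ℤ))^T.card * (X : Polynomial ℤ)^(m - T.card))
          * (X : Polynomial ℤ)^(n.choose 2 - (m+1).choose 2) := by
    intro T hT
    have hTs := Finset.mem_powerset.1 hT
    have hcard : T.card ≤ m := by
      have h := Finset.card_le_card hTs
      simpa using h
    have h1 : nu n (wT T) = (-1)^T.card := by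
      unfold nu Bset
      rw [if_pos (Finset.mem_image_of_mem wT hT), len_wT hTs]
    rw [h1, lenW_wT hTs, lenW_rev hn]
    have he : n.choose 2 - m.choose 2 - T.card
        = (m - T.card) + (n.choose 2 - (m+1).choose 2) := by omega
    rw [he, pow_add, map_pow]
    ring
  rw [Finset.sum_congr rfl step2, ← Finset.sum_mul]
  congr 1
  have hprod := Finset.prod_add (fun _ : ℕ => (Polynomial.C (-1:ℤ)))
    (fun _ => (X : Polynomial ℤ)) (Finset.Icc 1 m)
  rw [Finset.prod_const, Nat.card_Icc, Nat.add_sub_cancel] at hprod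
  have hterm : ∀ T ∈ (Finset.Icc 1 m).powerset,
      (∏ _i ∈ T, Polynomial.C (-1:ℤ)) * ∏ _i ∈ (Finset.Icc 1 m) \ T, (X : Polynomial ℤ)
      = (Polynomial.C (-1:ℤ))^T.card * (X : Polynomial ℤ)^(m - T.card) := by
    intro T hT
    rw [Finset.prod_const, Finset.prod_const, Finset.card_sdiff_of_subset (Finset.mem_powerset.1 hT)]
    congr 2
    simp
  rw [Finset.sum_congr rfl hterm] at hprod
  rw [← hprod]
  have hX : Polynomial.C (-1:ℤ) + X = X - 1 := by
    rw [map_neg, map_one]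
    ring
  rw [hX]

end WachsPaper
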